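/- For any two probability measures p, q on a measurable space, TV(p, q) ≤ 1 − (1/2) exp(−KL(p ‖ q)). -/

import Mathlib

open MeasureTheory
open scoped ENNReal Classical

/-- Total variation distance between two measures: `sup_B |p(B) − q(B)|`. -/
noncomputable def tvDist {𝒳 : Type*} [MeasurableSpace 𝒳] (p q : Measure 𝒳) : ℝ :=
  sSup {r : ℝ | ∃ B : Set 𝒳, MeasurableSet B ∧ r = |(p B).toReal - (q B).toReal|}

/-- Kullback–Leibler divergence, `∞` unless `p ≪ q` with integrable log-likelihood ratio. -/

noncomputable def klDiv {𝒳 : Type*} [MeasurableSpace 𝒳] (p q : Measure 𝒳) : ℝ≥0∞ :=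
  if p ≪ q ∧ Integrable (llr p q) p then ENNReal.ofReal (∫ x, llr p q x ∂p) else ⊤

/-- `exp(−x)` for `x ∈ [0, ∞]`, with `exp(−∞) = 0`. -/
noncomputable def expNeg (x : ℝ≥0∞) : ℝ :=
  if x = ⊤ then 0 else Real.exp (-x.toReal)

/-!
With `a = p B`, `b = q B`, bound the Bhattacharyya coefficient `BC = ∫ √(dq/dp) dp` from both
sides. Jensen's inequality for `exp` gives `exp (-KL / 2) ≤ BC`, while Cauchy–Schwarz on `B` and on
`Bᶜ` gives `BC ≤ √(ab) + √((1 - a)(1 - b))`, whose square is at most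
`1 - (a - b)² ≤ 2 (1 - |a - b|)`.
-/

lemma sq_sqrt_mul_add_sqrt_one_sub_mul_le {a b : ℝ} (ha₀ : 0 ≤ a) (ha₁ : a ≤ 1) (hb₀ : 0 ≤ b)
    (hb₁ : b ≤ 1) : (√(a * b) + √((1 - a) * (1 - b))) ^ 2 ≤ 1 - (a - b) ^ 2 := by
  have hprod : √(a * b) * √((1 - a) * (1 - b)) = √(a * (1 - a)) * √(b * (1 - b)) := by
    rw [← Real.sqrt_mul (by positivity), ← Real.sqrt_mul (by nlinarith)]
    ring_nf
  -- AM-GM on the cross term: `√(a(1-a)) √(b(1-b)) ≤ (a(1-a) + b(1-b)) / 2`.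
  have hAMGM := sq_nonneg (√(a * (1 - a)) - √(b * (1 - b)))
  nlinarith [Real.sq_sqrt (mul_nonneg ha₀ hb₀),
    Real.sq_sqrt (by nlinarith : 0 ≤ (1 - a) * (1 - b)),
    Real.sq_sqrt (by nlinarith : 0 ≤ a * (1 - a)), Real.sq_sqrt (by nlinarith : 0 ≤ b * (1 - b))]

namespace MeasureTheory

variable {α : Type*} [MeasurableSpace α] {μ ν : Measure α}

namespace Measure

noncomputable def bhattacharyyaCoeff (μ ν : Measure α) : ℝ :=
  ∫ x, √(ν.rnDeriv μ x).toReal ∂μ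

lemma memLp_two_sqrt_toReal_rnDeriv [IsFiniteMeasure ν] :
    MemLp (fun x ↦ √(ν.rnDeriv μ x).toReal) 2 μ := by
  rw [memLp_two_iff_integrable_sq
    (measurable_rnDeriv ν μ).ennreal_toReal.sqrt.aestronglyMeasurable]
  simpa only [Real.sq_sqrt ENNReal.toReal_nonneg] using integrable_toReal_rnDeriv

lemma setIntegral_sqrt_toReal_rnDeriv_le [IsFiniteMeasure μ] [IsFiniteMeasure ν] (s : Set α) :
    ∫ x in s, √(ν.rnDeriv μ x).toReal ∂μ ≤ √(μ.real s * ν.real s) := by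
  have hCS := integral_mul_le_Lp_mul_Lq_of_nonneg (μ := μ.restrict s)
    Real.HolderConjugate.two_two (ae_of_all _ fun x ↦ Real.sqrt_nonneg (ν.rnDeriv μ x).toReal)
    (ae_of_all _ fun _ ↦ zero_le_one) (by simpa using memLp_two_sqrt_toReal_rnDeriv.restrict s)
    (memLp_const 1)
  have hν : ∫ x in s, (ν.rnDeriv μ x).toReal ∂μ ≤ ν.real s :=
    setIntegral_toReal_rnDeriv_le (measure_ne_top ν s)
  calc ∫ x in s, √(ν.rnDeriv μ x).toReal ∂μ
      ≤ (∫ x in s, (ν.rnDeriv μ x).toReal ∂μ) ^ (1 / 2 : ℝ) * μ.real s ^ (1 / 2 : ℝ) := by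
        simpa using hCS
    _ ≤ ν.real s ^ (1 / 2 : ℝ) * μ.real s ^ (1 / 2 : ℝ) := by
        gcongr
    _ = √(μ.real s * ν.real s) := by
        rw [Real.sqrt_eq_rpow, Real.mul_rpow measureReal_nonneg measureReal_nonneg, mul_comm]

lemma bhattacharyyaCoeff_le [IsFiniteMeasure μ] [IsFiniteMeasure ν] {s : Set α}
    (hs : MeasurableSet s) :
    bhattacharyyaCoeff μ ν ≤ √(μ.real s * ν.real s) + √(μ.real sᶜ * ν.real sᶜ) := by
  rw [bhattacharyyaCoeff, ← integral_add_compl hs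
    (memLp_two_sqrt_toReal_rnDeriv.integrable one_le_two)]
  exact add_le_add (setIntegral_sqrt_toReal_rnDeriv_le s) (setIntegral_sqrt_toReal_rnDeriv_le sᶜ)

lemma exp_neg_half_integral_llr_le_bhattacharyyaCoeff [IsProbabilityMeasure μ]
    [IsFiniteMeasure ν] (hμν : μ ≪ ν) (hint : Integrable (llr μ ν) μ) :
    Real.exp (-(∫ x, llr μ ν x ∂μ) / 2) ≤ bhattacharyyaCoeff μ ν := by
  have hsqrt : (fun x ↦ Real.exp (-llr μ ν x / 2)) =ᵐ[μ] fun x ↦ √(ν.rnDeriv μ x).toReal := by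
    filter_upwards [exp_neg_llr hμν] with x hx
    rw [Real.exp_half, hx]
  have hJensen := convexOn_exp.map_integral_le (f := fun x ↦ -llr μ ν x / 2)
    Real.continuous_exp.continuousOn isClosed_univ
    (ae_of_all _ fun x ↦ Set.mem_univ _) (hint.neg.div_const 2)
    ((memLp_two_sqrt_toReal_rnDeriv.integrable one_le_two).congr hsqrt.symm)
  simp only [integral_div, integral_neg] at hJensen
  rwa [integral_congr_ae hsqrt] at hJensen

end Measure

lemma exp_neg_integral_llr_le_two_mul_one_sub_abs [IsProbabilityMeasure μ]
    [IsProbabilityMeasure ν] (hμν : μ ≪ ν) (hint : Integrable (llr μ ν) μ) {s : Set α}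
    (hs : MeasurableSet s) :
    Real.exp (-∫ x, llr μ ν x ∂μ) ≤ 2 * (1 - |μ.real s - ν.real s|) := by
  set a := μ.real s
  set b := ν.real s
  have hBC : Real.exp (-(∫ x, llr μ ν x ∂μ) / 2) ≤ √(a * b) + √((1 - a) * (1 - b)) := by
    simpa only [probReal_compl_eq_one_sub hs] using
      (Measure.exp_neg_half_integral_llr_le_bhattacharyyaCoeff hμν hint).trans
        (Measure.bhattacharyyaCoeff_le hs)
  calc Real.exp (-∫ x, llr μ ν x ∂μ) = Real.exp (-(∫ x, llr μ ν x ∂μ) / 2) ^ 2 := by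
        rw [← Real.exp_nat_mul]; ring_nf
    _ ≤ (√(a * b) + √((1 - a) * (1 - b))) ^ 2 := by gcongr
    _ ≤ 1 - (a - b) ^ 2 := sq_sqrt_mul_add_sqrt_one_sub_mul_le measureReal_nonneg
        measureReal_le_one measureReal_nonneg measureReal_le_one
    _ ≤ 2 * (1 - |a - b|) := by nlinarith [sq_abs (a - b), sq_nonneg (|a - b| - 1)]

end MeasureTheory

lemma expNeg_ofReal_le (t : ℝ) : expNeg (ENNReal.ofReal t) ≤ Real.exp (-t) := by
  rw [expNeg, if_neg ENNReal.ofReal_ne_top, ENNReal.toReal_ofReal']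
  gcongr
  exact le_max_left t 0

lemma expNeg_klDiv_le_two_mul_one_sub_abs {𝒳 : Type*} [MeasurableSpace 𝒳] (p q : Measure 𝒳)
    [IsProbabilityMeasure p] [IsProbabilityMeasure q] {B : Set 𝒳} (hB : MeasurableSet B) :
    expNeg (klDiv p q) ≤ 2 * (1 - |p.real B - q.real B|) := by
  rw [klDiv]
  split_ifs with h
  · exact (expNeg_ofReal_le _).trans (exp_neg_integral_llr_le_two_mul_one_sub_abs h.1 h.2 hB)
  · have habs : |p.real B - q.real B| ≤ 1 := abs_sub_le_of_nonneg_of_le measureReal_nonneg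
      measureReal_le_one measureReal_nonneg measureReal_le_one
    simp only [expNeg, if_true]
    linarith

/-- Bretagnolle–Huber inequality: for any two probability measures `p, q`,
`TV(p, q) ≤ 1 − (1/2) exp(−KL(p ‖ q))`. -/
theorem stmt17 {𝒳 : Type*} [MeasurableSpace 𝒳] (p q : Measure 𝒳)
    [IsProbabilityMeasure p] [IsProbabilityMeasure q] :
    tvDist p q ≤ 1 - (1 / 2) * expNeg (klDiv p q) := by
  refine csSup_le ⟨_, ∅, MeasurableSet.empty, rfl⟩ ?_
  rintro r ⟨B, hB, rfl⟩
  change |p.real B - q.real B| ≤ _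
  linarith [expNeg_klDiv_le_two_mul_one_sub_abs p q hB]
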